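/- Under the Case 2 configuration of the banner-in-square setting (dist_G(v3,v5) = 2, and vertices a, b, c, d, e with av3, av5, bv2, bv3, cv3, cv4, dv1, dv4, ev1, ev2 all edges of G), the pairs ac, ab, bc, cd, de, be are all edges of G. -/

import Mathlib

/-- The square of a graph `G`: two distinct vertices are adjacent in `G²` iff
their distance in `G` is 1 or 2. -/
def SimpleGraph.square {V : Type*} (G : SimpleGraph V) : SimpleGraph V where
  Adj u v := u ≠ v ∧ G.edist u v ≤ 2
  symm := ⟨fun u v ⟨h, hd⟩ => ⟨h.symm, by rwa [SimpleGraph.edist_comm]⟩⟩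
  loopless := ⟨fun u ⟨h, _⟩ => h rfl⟩

/-- `D` is an efficient dominating set of `G`: `D` is an independent set and
every vertex outside `D` has exactly one neighbor in `D`. -/
def SimpleGraph.IsEfficientDominatingSet {V : Type*} (G : SimpleGraph V) (D : Set V) : Prop :=
  (∀ u ∈ D, ∀ v ∈ D, ¬ G.Adj u v) ∧ ∀ v ∉ D, ∃! u, u ∈ D ∧ G.Adj v u

/-- The banner: a chordless 4-cycle 0-1-2-3-0 together with the vertex 4
adjacent to exactly one vertex (namely 0) of the cycle. -/
def banner : SimpleGraph (Fin 5) :=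
  SimpleGraph.fromEdgeSet {s(0, 1), s(1, 2), s(2, 3), s(3, 0), s(0, 4)}

/-- `G` is `H`-free: no induced subgraph of `G` is isomorphic to `H`. -/
def IsInducedFree {W V : Type*} (H : SimpleGraph W) (G : SimpleGraph V) : Prop :=
  IsEmpty (H ↪g G)


private lemma far1 {V : Type*} {G : SimpleGraph V} {x y : V}
    (h : 3 ≤ G.edist x y) (hxy : G.Adj x y) : False := by
  rw [SimpleGraph.edist_eq_one_iff_adj.mpr hxy] at h
  norm_num at h

private lemma far2 {V : Type*} {G : SimpleGraph V} {x y u : V}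
    (h : 3 ≤ G.edist x y) (h1 : G.Adj x u) (h2 : G.Adj u y) : False := by
  have t : G.edist x y ≤ G.edist x u + G.edist u y := G.edist_triangle
  rw [SimpleGraph.edist_eq_one_iff_adj.mpr h1, SimpleGraph.edist_eq_one_iff_adj.mpr h2] at t
  have := h.trans t
  norm_num at this

private lemma far_eq {V : Type*} {G : SimpleGraph V} {x y : V}
    (h : 3 ≤ G.edist x y) (h2 : G.edist x y ≤ 2) : False := by
  have := h.trans h2; norm_num at this

private lemma far_ne {V : Type*} {G : SimpleGraph V} {x y : V}
    (h : 3 ≤ G.edist x y) : x ≠ y := by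
  rintro rfl; rw [SimpleGraph.edist_self] at h; norm_num at h

instance : DecidableRel banner.Adj := fun u v =>
  decidable_of_iff ((s(u,v) = s(0,1) ∨ s(u,v) = s(1,2) ∨ s(u,v) = s(2,3) ∨ s(u,v) = s(3,0) ∨ s(u,v) = s(0,4)) ∧ u ≠ v)
    (by rw [banner, SimpleGraph.fromEdgeSet_adj]; simp [Set.mem_insert_iff, Set.mem_singleton_iff])

instance : DecidableRel (SimpleGraph.pathGraph 6).Adj := fun _ _ =>
  decidable_of_iff _ (SimpleGraph.pathGraph_adj).symm

lemma no_p6 {V : Type*} {G : SimpleGraph V}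
    (hP6 : IsInducedFree (SimpleGraph.pathGraph 6) G)
    (x0 x1 x2 x3 x4 x5 : V)
    (e01 : G.Adj x0 x1) (e12 : G.Adj x1 x2) (e23 : G.Adj x2 x3)
    (e34 : G.Adj x3 x4) (e45 : G.Adj x4 x5)
    (n02 : ¬G.Adj x0 x2) (n03 : ¬G.Adj x0 x3) (n04 : ¬G.Adj x0 x4) (n05 : ¬G.Adj x0 x5) (n13 : ¬G.Adj x1 x3) (n14 : ¬G.Adj x1 x4) (n15 : ¬G.Adj x1 x5) (n24 : ¬G.Adj x2 x4) (n25 : ¬G.Adj x2 x5) (n35 : ¬G.Adj x3 x5)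
    (d02 : x0 ≠ x2) (d03 : x0 ≠ x3) (d04 : x0 ≠ x4) (d05 : x0 ≠ x5) (d13 : x1 ≠ x3) (d14 : x1 ≠ x4) (d15 : x1 ≠ x5) (d24 : x2 ≠ x4) (d25 : x2 ≠ x5) (d35 : x3 ≠ x5) : False := by
  refine hP6.false ⟨⟨![x0,x1,x2,x3,x4,x5], ?_⟩, ?_⟩
  · intro u v h
    fin_cases u <;> fin_cases v
    · rfl
    · exact absurd h e01.ne
    · exact absurd h d02
    · exact absurd h d03
    · exact absurd h d04
    · exact absurd h d05
    · exact absurd h e01.ne'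
    · rfl
    · exact absurd h e12.ne
    · exact absurd h d13
    · exact absurd h d14
    · exact absurd h d15
    · exact absurd h.symm d02
    · exact absurd h e12.ne'
    · rfl
    · exact absurd h e23.ne
    · exact absurd h d24
    · exact absurd h d25
    · exact absurd h.symm d03
    · exact absurd h.symm d13
    · exact absurd h e23.ne'
    · rfl
    · exact absurd h e34.ne
    · exact absurd h d35
    · exact absurd h.symm d04
    · exact absurd h.symm d14
    · exact absurd h.symm d24
    · exact absurd h e34.ne'
    · rfl
    · exact absurd h e45.ne
    · exact absurd h.symm d05
    · exact absurd h.symm d15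
    · exact absurd h.symm d25
    · exact absurd h.symm d35
    · exact absurd h e45.ne'
    · rfl
  · intro u v
    rw [SimpleGraph.pathGraph_adj]
    fin_cases u <;> fin_cases v
    · exact iff_of_false (G.irrefl) (by decide)
    · exact iff_of_true e01 (by decide)
    · exact iff_of_false n02 (by decide)
    · exact iff_of_false n03 (by decide)
    · exact iff_of_false n04 (by decide)
    · exact iff_of_false n05 (by decide)
    · exact iff_of_true e01.symm (by decide)
    · exact iff_of_false (G.irrefl) (by decide)
    · exact iff_of_true e12 (by decide)
    · exact iff_of_false n13 (by decide)
    · exact iff_of_false n14 (by decide)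
    · exact iff_of_false n15 (by decide)
    · exact iff_of_false (fun h => n02 h.symm) (by decide)
    · exact iff_of_true e12.symm (by decide)
    · exact iff_of_false (G.irrefl) (by decide)
    · exact iff_of_true e23 (by decide)
    · exact iff_of_false n24 (by decide)
    · exact iff_of_false n25 (by decide)
    · exact iff_of_false (fun h => n03 h.symm) (by decide)
    · exact iff_of_false (fun h => n13 h.symm) (by decide)
    · exact iff_of_true e23.symm (by decide)
    · exact iff_of_false (G.irrefl) (by decide)
    · exact iff_of_true e34 (by decide)
    · exact iff_of_false n35 (by decide)
    · exact iff_of_false (fun h => n04 h.symm) (by decide)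
    · exact iff_of_false (fun h => n14 h.symm) (by decide)
    · exact iff_of_false (fun h => n24 h.symm) (by decide)
    · exact iff_of_true e34.symm (by decide)
    · exact iff_of_false (G.irrefl) (by decide)
    · exact iff_of_true e45 (by decide)
    · exact iff_of_false (fun h => n05 h.symm) (by decide)
    · exact iff_of_false (fun h => n15 h.symm) (by decide)
    · exact iff_of_false (fun h => n25 h.symm) (by decide)
    · exact iff_of_false (fun h => n35 h.symm) (by decide)
    · exact iff_of_true e45.symm (by decide)
    · exact iff_of_false (G.irrefl) (by decide)

lemma no_banner {V : Type*} {G : SimpleGraph V}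
    (hB : IsInducedFree banner G)
    (y0 y1 y2 y3 y4 : V)
    (e01 : G.Adj y0 y1) (e12 : G.Adj y1 y2) (e23 : G.Adj y2 y3)
    (e03 : G.Adj y0 y3) (e04 : G.Adj y0 y4)
    (n02 : ¬G.Adj y0 y2) (n13 : ¬G.Adj y1 y3) (n14 : ¬G.Adj y1 y4) (n24 : ¬G.Adj y2 y4) (n34 : ¬G.Adj y3 y4)
    (d02 : y0 ≠ y2) (d13 : y1 ≠ y3) (d14 : y1 ≠ y4) (d24 : y2 ≠ y4) (d34 : y3 ≠ y4) : False := by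
  refine hB.false ⟨⟨![y0,y1,y2,y3,y4], ?_⟩, ?_⟩
  · intro u v h
    fin_cases u <;> fin_cases v
    · rfl
    · exact absurd h e01.ne
    · exact absurd h d02
    · exact absurd h e03.ne
    · exact absurd h e04.ne
    · exact absurd h e01.ne'
    · rfl
    · exact absurd h e12.ne
    · exact absurd h d13
    · exact absurd h d14
    · exact absurd h.symm d02
    · exact absurd h e12.ne'
    · rfl
    · exact absurd h e23.ne
    · exact absurd h d24
    · exact absurd h e03.ne'
    · exact absurd h.symm d13
    · exact absurd h e23.ne'
    · rfl
    · exact absurd h d34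
    · exact absurd h e04.ne'
    · exact absurd h.symm d14
    · exact absurd h.symm d24
    · exact absurd h.symm d34
    · rfl
  · intro u v
    fin_cases u <;> fin_cases v
    · exact iff_of_false (G.irrefl) (by decide)
    · exact iff_of_true e01 (by decide)
    · exact iff_of_false n02 (by decide)
    · exact iff_of_true e03 (by decide)
    · exact iff_of_true e04 (by decide)
    · exact iff_of_true e01.symm (by decide)
    · exact iff_of_false (G.irrefl) (by decide)
    · exact iff_of_true e12 (by decide)
    · exact iff_of_false n13 (by decide)
    · exact iff_of_false n14 (by decide)
    · exact iff_of_false (fun h => n02 h.symm) (by decide)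
    · exact iff_of_true e12.symm (by decide)
    · exact iff_of_false (G.irrefl) (by decide)
    · exact iff_of_true e23 (by decide)
    · exact iff_of_false n24 (by decide)
    · exact iff_of_true e03.symm (by decide)
    · exact iff_of_false (fun h => n13 h.symm) (by decide)
    · exact iff_of_true e23.symm (by decide)
    · exact iff_of_false (G.irrefl) (by decide)
    · exact iff_of_false n34 (by decide)
    · exact iff_of_true e04.symm (by decide)
    · exact iff_of_false (fun h => n14 h.symm) (by decide)
    · exact iff_of_false (fun h => n24 h.symm) (by decide)
    · exact iff_of_false (fun h => n34 h.symm) (by decide)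
    · exact iff_of_false (G.irrefl) (by decide)


theorem banner_case2_edges {V : Type*} [Fintype V] (G : SimpleGraph V)
    (hP6 : IsInducedFree (SimpleGraph.pathGraph 6) G)
    (hBanner : IsInducedFree banner G)
    (D : Set V) (hD : G.IsEfficientDominatingSet D)
    (v1 v2 v3 v4 v5 : V)
    (h12 : G.edist v1 v2 ≤ 2) (h23 : G.edist v2 v3 ≤ 2) (h34 : G.edist v3 v4 ≤ 2)
    (h41 : G.edist v4 v1 ≤ 2) (h35 : G.edist v3 v5 ≤ 2)
    (h13 : 3 ≤ G.edist v1 v3) (h15 : 3 ≤ G.edist v1 v5) (h24 : 3 ≤ G.edist v2 v4)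
    (h25 : 3 ≤ G.edist v2 v5) (h45 : 3 ≤ G.edist v4 v5)
    (hdist35 : G.edist v3 v5 = 2)
    (a b c d e : V)
    (hav3 : G.Adj a v3) (hav5 : G.Adj a v5) (hbv2 : G.Adj b v2) (hbv3 : G.Adj b v3)
    (hcv3 : G.Adj c v3) (hcv4 : G.Adj c v4) (hdv1 : G.Adj d v1) (hdv4 : G.Adj d v4)
    (hev1 : G.Adj e v1) (hev2 : G.Adj e v2)
    : G.Adj a c ∧ G.Adj a b ∧ G.Adj b c ∧ G.Adj c d ∧ G.Adj d e ∧ G.Adj b e := by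
  have nv1v3 : ¬ G.Adj v1 v3 := fun h => far1 h13 h
  have nv1v5 : ¬ G.Adj v1 v5 := fun h => far1 h15 h
  have nv2v4 : ¬ G.Adj v2 v4 := fun h => far1 h24 h
  have nv2v5 : ¬ G.Adj v2 v5 := fun h => far1 h25 h
  have nv4v5 : ¬ G.Adj v4 v5 := fun h => far1 h45 h
  have nv3v5 : ¬ G.Adj v3 v5 := fun h => by rw [SimpleGraph.edist_eq_one_iff_adj.mpr h] at hdist35; norm_num at hdist35
  have nav1 : ¬ G.Adj a v1 := fun h => far2 h13 h.symm hav3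
  have nav2 : ¬ G.Adj a v2 := fun h => far2 h25 h.symm hav5
  have nav4 : ¬ G.Adj a v4 := fun h => far2 h45 h.symm hav5
  have nbv1 : ¬ G.Adj b v1 := fun h => far2 h13 h.symm hbv3
  have nbv4 : ¬ G.Adj b v4 := fun h => far2 h24 hbv2.symm h
  have nbv5 : ¬ G.Adj b v5 := fun h => far2 h25 hbv2.symm h
  have ncv1 : ¬ G.Adj c v1 := fun h => far2 h13 h.symm hcv3
  have ncv2 : ¬ G.Adj c v2 := fun h => far2 h24 h.symm hcv4
  have ncv5 : ¬ G.Adj c v5 := fun h => far2 h45 hcv4.symm h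
  have ndv2 : ¬ G.Adj d v2 := fun h => far2 h24 h.symm hdv4
  have ndv3 : ¬ G.Adj d v3 := fun h => far2 h13 hdv1.symm h
  have ndv5 : ¬ G.Adj d v5 := fun h => far2 h45 hdv4.symm h
  have nev3 : ¬ G.Adj e v3 := fun h => far2 h13 hev1.symm h
  have nev4 : ¬ G.Adj e v4 := fun h => far2 h24 hev2.symm h
  have nev5 : ¬ G.Adj e v5 := fun h => far2 h15 hev1.symm h
  have dv1v2 : v1 ≠ v2 := by rintro rfl; exact far_eq h13 h23
  have dv1v3 : v1 ≠ v3 := far_ne h13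
  have dv1v4 : v1 ≠ v4 := by rintro rfl; rw [SimpleGraph.edist_comm] at h34; exact far_eq h13 h34
  have dv1v5 : v1 ≠ v5 := far_ne h15
  have dv2v3 : v2 ≠ v3 := by rintro rfl; exact far_eq h24 h34
  have dv2v4 : v2 ≠ v4 := far_ne h24
  have dv2v5 : v2 ≠ v5 := far_ne h25
  have dv3v4 : v3 ≠ v4 := by rintro rfl; exact far_eq h24 h23
  have dv3v5 : v3 ≠ v5 := by rintro rfl; rw [SimpleGraph.edist_self] at hdist35; norm_num at hdist35
  have dv4v5 : v4 ≠ v5 := far_ne h45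
  have dav1 : a ≠ v1 := by rintro rfl; exact far1 h13 hav3
  have dav2 : a ≠ v2 := by rintro rfl; exact far1 h25 hav5
  have dav3 : a ≠ v3 := hav3.ne
  have dav4 : a ≠ v4 := by rintro rfl; exact far1 h45 hav5
  have dav5 : a ≠ v5 := hav5.ne
  have dbv1 : b ≠ v1 := by rintro rfl; exact far1 h13 hbv3
  have dbv2 : b ≠ v2 := hbv2.ne
  have dbv3 : b ≠ v3 := hbv3.ne
  have dbv4 : b ≠ v4 := by rintro rfl; exact far1 h24 hbv2.symm
  have dbv5 : b ≠ v5 := by rintro rfl; exact far1 h25 hbv2.symm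
  have dcv1 : c ≠ v1 := by rintro rfl; exact far1 h13 hcv3
  have dcv2 : c ≠ v2 := by rintro rfl; exact far1 h24 hcv4
  have dcv3 : c ≠ v3 := hcv3.ne
  have dcv4 : c ≠ v4 := hcv4.ne
  have dcv5 : c ≠ v5 := by rintro rfl; exact far1 h45 hcv4.symm
  have ddv1 : d ≠ v1 := hdv1.ne
  have ddv2 : d ≠ v2 := by rintro rfl; exact far1 h24 hdv4
  have ddv3 : d ≠ v3 := by rintro rfl; exact far1 h13 hdv1.symm
  have ddv4 : d ≠ v4 := hdv4.ne
  have ddv5 : d ≠ v5 := by rintro rfl; exact far1 h45 hdv4.symm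
  have dev1 : e ≠ v1 := hev1.ne
  have dev2 : e ≠ v2 := hev2.ne
  have dev3 : e ≠ v3 := by rintro rfl; exact far1 h13 hev1.symm
  have dev4 : e ≠ v4 := by rintro rfl; exact far1 h24 hev2.symm
  have dev5 : e ≠ v5 := by rintro rfl; exact far1 h15 hev1.symm
  have dab : a ≠ b := by rintro rfl; exact far2 h25 hbv2.symm hav5
  have dac : a ≠ c := by rintro rfl; exact far2 h45 hcv4.symm hav5
  have dad : a ≠ d := by rintro rfl; exact far2 h13 hdv1.symm hav3
  have dae : a ≠ e := by rintro rfl; exact far2 h15 hev1.symm hav5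
  have dbc : b ≠ c := by rintro rfl; exact far2 h24 hbv2.symm hcv4
  have dbd : b ≠ d := by rintro rfl; exact far2 h13 hdv1.symm hbv3
  have dbe : b ≠ e := by rintro rfl; exact far2 h13 hev1.symm hbv3
  have dcd : c ≠ d := by rintro rfl; exact far2 h13 hdv1.symm hcv3
  have dce : c ≠ e := by rintro rfl; exact far2 h24 hev2.symm hcv4
  have dde : d ≠ e := by rintro rfl; exact far2 h24 hev2.symm hdv4
  have hac : G.Adj a c := by
    by_contra hnhac
    by_cases h0 : G.Adj v1 v4
    · -- v1v4 adjacent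
      by_cases h1 : G.Adj v3 v4
      · -- v3v4 adjacent
        exact far2 h13 h0 h1.symm
      · -- v3v4 not adjacent
        exact no_p6 hP6 v1 v4 c v3 a v5 h0 hcv4.symm hcv3.symm.symm hav3.symm hav5.symm.symm (fun h => ncv1 h.symm) nv1v3 (fun h => nav1 h.symm) nv1v5 (fun h => h1 h.symm) (fun h => nav4 h.symm) nv4v5 (fun h => hnhac h.symm) (fun h => (fun h => ncv5 h.symm) h.symm) nv3v5 dcv1.symm dv1v3 dav1.symm dv1v5 dv3v4.symm dav4.symm dv4v5 dac.symm dcv5 dv3v5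
    · -- v1v4 not adjacent
      by_cases h2 : G.Adj a d
      · -- ad adjacent
        by_cases h3 : G.Adj v3 v4
        · -- v3v4 adjacent
          exact no_banner hBanner a v3 v4 d v5 hav3.symm.symm h3 hdv4.symm h2 hav5.symm.symm (fun h => (fun h => nav4 h.symm) h.symm) (fun h => ndv3 h.symm) nv3v5 nv4v5 (fun h => (fun h => ndv5 h.symm) h.symm) dav4 ddv3.symm dv3v5 dv4v5 ddv5
        · -- v3v4 not adjacent
          by_cases h4 : G.Adj c d
          · -- cd adjacent
            exact no_banner hBanner a v3 c d v5 hav3.symm.symm hcv3.symm h4 h2 hav5.symm.symm hnhac (fun h => ndv3 h.symm) nv3v5 (fun h => (fun h => ncv5 h.symm) h.symm) (fun h => (fun h => ndv5 h.symm) h.symm) dac ddv3.symm dv3v5 dcv5 ddv5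
          · -- cd not adjacent
            by_cases h5 : G.Adj v1 v2
            · -- v1v2 adjacent
              by_cases h6 : G.Adj v2 v3
              · -- v2v3 adjacent
                exact far2 h13 h5 h6
              · -- v2v3 not adjacent
                exact no_p6 hP6 v2 v1 d v4 c v3 h5.symm hdv1.symm hdv4.symm.symm hcv4.symm hcv3.symm.symm (fun h => ndv2 h.symm) nv2v4 (fun h => ncv2 h.symm) h6 h0 (fun h => ncv1 h.symm) nv1v3 (fun h => h4 h.symm) (fun h => (fun h => ndv3 h.symm) h.symm) (fun h => h3 h.symm) ddv2.symm dv2v4 dcv2.symm dv2v3 dv1v4 dcv1.symm dv1v3 dcd.symm ddv3 dv3v4.symm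
            · -- v1v2 not adjacent
              by_cases h7 : G.Adj v2 v3
              · -- v2v3 adjacent
                exact no_p6 hP6 v1 d v4 c v3 v2 hdv1.symm hdv4.symm.symm hcv4.symm hcv3.symm.symm h7.symm h0 (fun h => ncv1 h.symm) nv1v3 h5 (fun h => h4 h.symm) (fun h => (fun h => ndv3 h.symm) h.symm) (fun h => (fun h => ndv2 h.symm) h.symm) (fun h => h3 h.symm) (fun h => nv2v4 h.symm) (fun h => (fun h => ncv2 h.symm) h.symm) dv1v4 dcv1.symm dv1v3 dv1v2 dcd.symm ddv3 ddv2 dv3v4.symm dv2v4.symm dcv2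
              · -- v2v3 not adjacent
                by_cases h8 : G.Adj b d
                · -- bd adjacent
                  by_cases h9 : G.Adj a b
                  · -- ab adjacent
                    by_cases h10 : G.Adj b c
                    · -- bc adjacent
                      exact no_banner hBanner b c v4 d v2 h10 hcv4.symm.symm hdv4.symm h8 hbv2.symm.symm (fun h => (fun h => nbv4 h.symm) h.symm) h4 (fun h => (fun h => ncv2 h.symm) h.symm) (fun h => nv2v4 h.symm) (fun h => (fun h => ndv2 h.symm) h.symm) dbv4 dcd dcv2 dv2v4.symm ddv2
                    · -- bc not adjacent
                      by_cases h11 : G.Adj b e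
                      · -- be adjacent
                        by_cases h12 : G.Adj c e
                        · -- ce adjacent
                          exact no_banner hBanner c v3 b e v4 hcv3.symm.symm hbv3.symm h11 h12 hcv4.symm.symm (fun h => h10 h.symm) (fun h => nev3 h.symm) h3 (fun h => (fun h => nbv4 h.symm) h.symm) (fun h => (fun h => nev4 h.symm) h.symm) dbc.symm dev3.symm dv3v4 dbv4 dev4
                        · -- ce not adjacent
                          exact no_p6 hP6 v1 e b v3 c v4 hev1.symm h11.symm hbv3.symm.symm hcv3.symm hcv4.symm.symm (fun h => nbv1 h.symm) nv1v3 (fun h => ncv1 h.symm) h0 (fun h => (fun h => nev3 h.symm) h.symm) (fun h => h12 h.symm) (fun h => (fun h => nev4 h.symm) h.symm) h10 (fun h => (fun h => nbv4 h.symm) h.symm) h3 dbv1.symm dv1v3 dcv1.symm dv1v4 dev3 dce.symm dev4 dbc dbv4 dv3v4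
                      · -- be not adjacent
                        by_cases h13 : G.Adj c e
                        · -- ce adjacent
                          by_cases h14 : G.Adj a e
                          · -- ae adjacent
                            exact no_banner hBanner a v3 c e v5 hav3.symm.symm hcv3.symm h13 h14 hav5.symm.symm hnhac (fun h => nev3 h.symm) nv3v5 (fun h => (fun h => ncv5 h.symm) h.symm) (fun h => (fun h => nev5 h.symm) h.symm) dac dev3.symm dv3v5 dcv5 dev5
                          · -- ae not adjacent
                            exact no_p6 hP6 v1 e v2 b a v5 hev1.symm hev2.symm.symm hbv2.symm h9.symm hav5.symm.symm h5 (fun h => nbv1 h.symm) (fun h => nav1 h.symm) nv1v5 (fun h => h11 h.symm) (fun h => h14 h.symm) (fun h => (fun h => nev5 h.symm) h.symm) (fun h => nav2 h.symm) nv2v5 (fun h => (fun h => nbv5 h.symm) h.symm) dv1v2 dbv1.symm dav1.symm dv1v5 dbe.symm dae.symm dev5 dav2.symm dv2v5 dbv5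
                        · -- ce not adjacent
                          exact no_p6 hP6 v1 e v2 b v3 c hev1.symm hev2.symm.symm hbv2.symm hbv3.symm.symm hcv3.symm h5 (fun h => nbv1 h.symm) nv1v3 (fun h => ncv1 h.symm) (fun h => h11 h.symm) (fun h => (fun h => nev3 h.symm) h.symm) (fun h => h13 h.symm) h7 (fun h => ncv2 h.symm) h10 dv1v2 dbv1.symm dv1v3 dcv1.symm dbe.symm dev3 dce.symm dv2v3 dcv2.symm dbc
                  · -- ab not adjacent
                    exact no_banner hBanner a v3 b d v5 hav3.symm.symm hbv3.symm h8 h2 hav5.symm.symm h9 (fun h => ndv3 h.symm) nv3v5 (fun h => (fun h => nbv5 h.symm) h.symm) (fun h => (fun h => ndv5 h.symm) h.symm) dab ddv3.symm dv3v5 dbv5 ddv5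
                · -- bd not adjacent
                  by_cases h15 : G.Adj b c
                  · -- bc adjacent
                    exact no_p6 hP6 v1 d v4 c b v2 hdv1.symm hdv4.symm.symm hcv4.symm h15.symm hbv2.symm.symm h0 (fun h => ncv1 h.symm) (fun h => nbv1 h.symm) h5 (fun h => h4 h.symm) (fun h => h8 h.symm) (fun h => (fun h => ndv2 h.symm) h.symm) (fun h => nbv4 h.symm) (fun h => nv2v4 h.symm) (fun h => (fun h => ncv2 h.symm) h.symm) dv1v4 dcv1.symm dbv1.symm dv1v2 dcd.symm dbd.symm ddv2 dbv4.symm dv2v4.symm dcv2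
                  · -- bc not adjacent
                    exact no_p6 hP6 v1 d v4 c v3 b hdv1.symm hdv4.symm.symm hcv4.symm hcv3.symm.symm hbv3.symm h0 (fun h => ncv1 h.symm) nv1v3 (fun h => nbv1 h.symm) (fun h => h4 h.symm) (fun h => (fun h => ndv3 h.symm) h.symm) (fun h => h8 h.symm) (fun h => h3 h.symm) (fun h => nbv4 h.symm) (fun h => h15 h.symm) dv1v4 dcv1.symm dv1v3 dbv1.symm dcd.symm ddv3 dbd.symm dv3v4.symm dbv4.symm dbc.symm
      · -- ad not adjacent
        by_cases h16 : G.Adj v3 v4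
        · -- v3v4 adjacent
          exact no_p6 hP6 v1 d v4 v3 a v5 hdv1.symm hdv4.symm.symm h16.symm hav3.symm hav5.symm.symm h0 nv1v3 (fun h => nav1 h.symm) nv1v5 (fun h => (fun h => ndv3 h.symm) h.symm) (fun h => h2 h.symm) (fun h => (fun h => ndv5 h.symm) h.symm) (fun h => nav4 h.symm) nv4v5 nv3v5 dv1v4 dv1v3 dav1.symm dv1v5 ddv3 dad.symm ddv5 dav4.symm dv4v5 dv3v5
        · -- v3v4 not adjacent
          by_cases h17 : G.Adj c d
          · -- cd adjacent
            exact no_p6 hP6 v1 d c v3 a v5 hdv1.symm h17.symm hcv3.symm.symm hav3.symm hav5.symm.symm (fun h => ncv1 h.symm) nv1v3 (fun h => nav1 h.symm) nv1v5 (fun h => (fun h => ndv3 h.symm) h.symm) (fun h => h2 h.symm) (fun h => (fun h => ndv5 h.symm) h.symm) (fun h => hnhac h.symm) (fun h => (fun h => ncv5 h.symm) h.symm) nv3v5 dcv1.symm dv1v3 dav1.symm dv1v5 ddv3 dad.symm ddv5 dac.symm dcv5 dv3v5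
          · -- cd not adjacent
            exact no_p6 hP6 v1 d v4 c v3 a hdv1.symm hdv4.symm.symm hcv4.symm hcv3.symm.symm hav3.symm h0 (fun h => ncv1 h.symm) nv1v3 (fun h => nav1 h.symm) (fun h => h17 h.symm) (fun h => (fun h => ndv3 h.symm) h.symm) (fun h => h2 h.symm) (fun h => h16 h.symm) (fun h => nav4 h.symm) (fun h => hnhac h.symm) dv1v4 dcv1.symm dv1v3 dav1.symm dcd.symm ddv3 dad.symm dv3v4.symm dav4.symm dac.symm
  have hab : G.Adj a b := by
    by_contra hnhab
    by_cases h18 : G.Adj v1 v2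
    · -- v1v2 adjacent
      by_cases h19 : G.Adj v2 v3
      · -- v2v3 adjacent
        exact far2 h13 h18 h19
      · -- v2v3 not adjacent
        exact no_p6 hP6 v1 v2 b v3 a v5 h18 hbv2.symm hbv3.symm.symm hav3.symm hav5.symm.symm (fun h => nbv1 h.symm) nv1v3 (fun h => nav1 h.symm) nv1v5 h19 (fun h => nav2 h.symm) nv2v5 (fun h => hnhab h.symm) (fun h => (fun h => nbv5 h.symm) h.symm) nv3v5 dbv1.symm dv1v3 dav1.symm dv1v5 dv2v3 dav2.symm dv2v5 dab.symm dbv5 dv3v5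
    · -- v1v2 not adjacent
      by_cases h20 : G.Adj b d
      · -- bd adjacent
        by_cases h21 : G.Adj a d
        · -- ad adjacent
          exact no_banner hBanner a v3 b d v5 hav3.symm.symm hbv3.symm h20 h21 hav5.symm.symm hnhab (fun h => ndv3 h.symm) nv3v5 (fun h => (fun h => nbv5 h.symm) h.symm) (fun h => (fun h => ndv5 h.symm) h.symm) dab ddv3.symm dv3v5 dbv5 ddv5
        · -- ad not adjacent
          exact no_p6 hP6 v1 d b v3 a v5 hdv1.symm h20.symm hbv3.symm.symm hav3.symm hav5.symm.symm (fun h => nbv1 h.symm) nv1v3 (fun h => nav1 h.symm) nv1v5 (fun h => (fun h => ndv3 h.symm) h.symm) (fun h => h21 h.symm) (fun h => (fun h => ndv5 h.symm) h.symm) (fun h => hnhab h.symm) (fun h => (fun h => nbv5 h.symm) h.symm) nv3v5 dbv1.symm dv1v3 dav1.symm dv1v5 ddv3 dad.symm ddv5 dab.symm dbv5 dv3v5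
      · -- bd not adjacent
        by_cases h22 : G.Adj a d
        · -- ad adjacent
          by_cases h23 : G.Adj v2 v3
          · -- v2v3 adjacent
            by_cases h24 : G.Adj a e
            · -- ae adjacent
              exact no_banner hBanner a v3 v2 e v5 hav3.symm.symm h23.symm hev2.symm h24 hav5.symm.symm (fun h => (fun h => nav2 h.symm) h.symm) (fun h => nev3 h.symm) nv3v5 nv2v5 (fun h => (fun h => nev5 h.symm) h.symm) dav2 dev3.symm dv3v5 dv2v5 dev5
            · -- ae not adjacent
              exact no_p6 hP6 v1 e v2 v3 a v5 hev1.symm hev2.symm.symm h23 hav3.symm hav5.symm.symm h18 nv1v3 (fun h => nav1 h.symm) nv1v5 (fun h => (fun h => nev3 h.symm) h.symm) (fun h => h24 h.symm) (fun h => (fun h => nev5 h.symm) h.symm) (fun h => nav2 h.symm) nv2v5 nv3v5 dv1v2 dv1v3 dav1.symm dv1v5 dev3 dae.symm dev5 dav2.symm dv2v5 dv3v5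
          · -- v2v3 not adjacent
            exact no_p6 hP6 v1 d a v3 b v2 hdv1.symm h22.symm hav3.symm.symm hbv3.symm hbv2.symm.symm (fun h => nav1 h.symm) nv1v3 (fun h => nbv1 h.symm) h18 (fun h => (fun h => ndv3 h.symm) h.symm) (fun h => h20 h.symm) (fun h => (fun h => ndv2 h.symm) h.symm) hnhab (fun h => (fun h => nav2 h.symm) h.symm) (fun h => h23 h.symm) dav1.symm dv1v3 dbv1.symm dv1v2 ddv3 dbd.symm ddv2 dab dav2 dv2v3.symm
        · -- ad not adjacent
          by_cases h25 : G.Adj v1 v4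
          · -- v1v4 adjacent
            by_cases h26 : G.Adj c e
            · -- ce adjacent
              exact no_banner hBanner e v1 v4 c v2 hev1.symm.symm h25 hcv4.symm h26.symm hev2.symm.symm (fun h => (fun h => nev4 h.symm) h.symm) (fun h => ncv1 h.symm) h18 (fun h => nv2v4 h.symm) (fun h => (fun h => ncv2 h.symm) h.symm) dev4 dcv1.symm dv1v2 dv2v4.symm dcv2
            · -- ce not adjacent
              by_cases h27 : G.Adj a e
              · -- ae adjacent
                by_cases h28 : G.Adj v2 v3
                · -- v2v3 adjacent
                  exact no_banner hBanner a v3 v2 e v5 hav3.symm.symm h28.symm hev2.symm h27 hav5.symm.symm (fun h => (fun h => nav2 h.symm) h.symm) (fun h => nev3 h.symm) nv3v5 nv2v5 (fun h => (fun h => nev5 h.symm) h.symm) dav2 dev3.symm dv3v5 dv2v5 dev5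
                · -- v2v3 not adjacent
                  by_cases h29 : G.Adj v3 v4
                  · -- v3v4 adjacent
                    exact far2 h13 h25 h29.symm
                  · -- v3v4 not adjacent
                    exact no_p6 hP6 v2 e v1 v4 c v3 hev2.symm hev1.symm.symm h25 hcv4.symm hcv3.symm.symm (fun h => h18 h.symm) nv2v4 (fun h => ncv2 h.symm) h28 (fun h => (fun h => nev4 h.symm) h.symm) (fun h => h26 h.symm) (fun h => (fun h => nev3 h.symm) h.symm) (fun h => ncv1 h.symm) nv1v3 (fun h => h29 h.symm) dv1v2.symm dv2v4 dcv2.symm dv2v3 dev4 dce.symm dev3 dcv1.symm dv1v3 dv3v4.symm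
              · -- ae not adjacent
                exact no_p6 hP6 v2 e v1 v4 c a hev2.symm hev1.symm.symm h25 hcv4.symm hac.symm (fun h => h18 h.symm) nv2v4 (fun h => ncv2 h.symm) (fun h => nav2 h.symm) (fun h => (fun h => nev4 h.symm) h.symm) (fun h => h26 h.symm) (fun h => h27 h.symm) (fun h => ncv1 h.symm) (fun h => nav1 h.symm) (fun h => nav4 h.symm) dv1v2.symm dv2v4 dcv2.symm dav2.symm dev4 dce.symm dae.symm dcv1.symm dav1.symm dav4.symm
          · -- v1v4 not adjacent
            by_cases h30 : G.Adj v3 v4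
            · -- v3v4 adjacent
              exact no_p6 hP6 v1 d v4 v3 a v5 hdv1.symm hdv4.symm.symm h30.symm hav3.symm hav5.symm.symm h25 nv1v3 (fun h => nav1 h.symm) nv1v5 (fun h => (fun h => ndv3 h.symm) h.symm) (fun h => h22 h.symm) (fun h => (fun h => ndv5 h.symm) h.symm) (fun h => nav4 h.symm) nv4v5 nv3v5 dv1v4 dv1v3 dav1.symm dv1v5 ddv3 dad.symm ddv5 dav4.symm dv4v5 dv3v5
            · -- v3v4 not adjacent
              by_cases h31 : G.Adj c d
              · -- cd adjacent
                by_cases h32 : G.Adj b c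
                · -- bc adjacent
                  by_cases h33 : G.Adj a e
                  · -- ae adjacent
                    by_cases h34 : G.Adj d e
                    · -- de adjacent
                      by_cases h35 : G.Adj b e
                      · -- be adjacent
                        exact no_banner hBanner a v3 b e v5 hav3.symm.symm hbv3.symm h35 h33 hav5.symm.symm hnhab (fun h => nev3 h.symm) nv3v5 (fun h => (fun h => nbv5 h.symm) h.symm) (fun h => (fun h => nev5 h.symm) h.symm) dab dev3.symm dv3v5 dbv5 dev5
                      · -- be not adjacent
                        exact no_p6 hP6 v4 d e a v3 b hdv4.symm h34 h33.symm hav3.symm.symm hbv3.symm (fun h => nev4 h.symm) (fun h => nav4 h.symm) (fun h => h30 h.symm) (fun h => nbv4 h.symm) (fun h => h22 h.symm) (fun h => (fun h => ndv3 h.symm) h.symm) (fun h => h20 h.symm) (fun h => (fun h => nev3 h.symm) h.symm) (fun h => h35 h.symm) hnhab dev4.symm dav4.symm dv3v4.symm dbv4.symm dad.symm ddv3 dbd.symm dev3 dbe.symm dab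
                    · -- de not adjacent
                      exact no_p6 hP6 v3 a e v1 d v4 hav3.symm h33 hev1.symm.symm hdv1.symm hdv4.symm.symm (fun h => nev3 h.symm) (fun h => nv1v3 h.symm) (fun h => ndv3 h.symm) h30 (fun h => (fun h => nav1 h.symm) h.symm) h22 (fun h => (fun h => nav4 h.symm) h.symm) (fun h => h34 h.symm) (fun h => (fun h => nev4 h.symm) h.symm) h25 dev3.symm dv1v3.symm ddv3.symm dv3v4 dav1 dad dav4 dde.symm dev4 dv1v4
                  · -- ae not adjacent
                    by_cases h36 : G.Adj v2 v3
                    · -- v2v3 adjacent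
                      exact no_p6 hP6 v1 e v2 v3 a v5 hev1.symm hev2.symm.symm h36 hav3.symm hav5.symm.symm h18 nv1v3 (fun h => nav1 h.symm) nv1v5 (fun h => (fun h => nev3 h.symm) h.symm) (fun h => h33 h.symm) (fun h => (fun h => nev5 h.symm) h.symm) (fun h => nav2 h.symm) nv2v5 nv3v5 dv1v2 dv1v3 dav1.symm dv1v5 dev3 dae.symm dev5 dav2.symm dv2v5 dv3v5
                    · -- v2v3 not adjacent
                      by_cases h37 : G.Adj b e
                      · -- be adjacent
                        exact no_p6 hP6 v1 e b v3 a v5 hev1.symm h37.symm hbv3.symm.symm hav3.symm hav5.symm.symm (fun h => nbv1 h.symm) nv1v3 (fun h => nav1 h.symm) nv1v5 (fun h => (fun h => nev3 h.symm) h.symm) (fun h => h33 h.symm) (fun h => (fun h => nev5 h.symm) h.symm) (fun h => hnhab h.symm) (fun h => (fun h => nbv5 h.symm) h.symm) nv3v5 dbv1.symm dv1v3 dav1.symm dv1v5 dev3 dae.symm dev5 dab.symm dbv5 dv3v5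
                      · -- be not adjacent
                        exact no_p6 hP6 v1 e v2 b v3 a hev1.symm hev2.symm.symm hbv2.symm hbv3.symm.symm hav3.symm h18 (fun h => nbv1 h.symm) nv1v3 (fun h => nav1 h.symm) (fun h => h37 h.symm) (fun h => (fun h => nev3 h.symm) h.symm) (fun h => h33 h.symm) h36 (fun h => nav2 h.symm) (fun h => hnhab h.symm) dv1v2 dbv1.symm dv1v3 dav1.symm dbe.symm dev3 dae.symm dv2v3 dav2.symm dab.symm
                · -- bc not adjacent
                  by_cases h38 : G.Adj v2 v3
                  · -- v2v3 adjacent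
                    by_cases h39 : G.Adj a e
                    · -- ae adjacent
                      exact no_banner hBanner a v3 v2 e v5 hav3.symm.symm h38.symm hev2.symm h39 hav5.symm.symm (fun h => (fun h => nav2 h.symm) h.symm) (fun h => nev3 h.symm) nv3v5 nv2v5 (fun h => (fun h => nev5 h.symm) h.symm) dav2 dev3.symm dv3v5 dv2v5 dev5
                    · -- ae not adjacent
                      exact no_p6 hP6 v1 e v2 v3 a v5 hev1.symm hev2.symm.symm h38 hav3.symm hav5.symm.symm h18 nv1v3 (fun h => nav1 h.symm) nv1v5 (fun h => (fun h => nev3 h.symm) h.symm) (fun h => h39 h.symm) (fun h => (fun h => nev5 h.symm) h.symm) (fun h => nav2 h.symm) nv2v5 nv3v5 dv1v2 dv1v3 dav1.symm dv1v5 dev3 dae.symm dev5 dav2.symm dv2v5 dv3v5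
                  · -- v2v3 not adjacent
                    exact no_p6 hP6 v1 d c v3 b v2 hdv1.symm h31.symm hcv3.symm.symm hbv3.symm hbv2.symm.symm (fun h => ncv1 h.symm) nv1v3 (fun h => nbv1 h.symm) h18 (fun h => (fun h => ndv3 h.symm) h.symm) (fun h => h20 h.symm) (fun h => (fun h => ndv2 h.symm) h.symm) (fun h => h32 h.symm) (fun h => (fun h => ncv2 h.symm) h.symm) (fun h => h38 h.symm) dcv1.symm dv1v3 dbv1.symm dv1v2 ddv3 dbd.symm ddv2 dbc.symm dcv2 dv2v3.symm
              · -- cd not adjacent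
                exact no_p6 hP6 v1 d v4 c a v5 hdv1.symm hdv4.symm.symm hcv4.symm hac.symm hav5.symm.symm h25 (fun h => ncv1 h.symm) (fun h => nav1 h.symm) nv1v5 (fun h => h31 h.symm) (fun h => h22 h.symm) (fun h => (fun h => ndv5 h.symm) h.symm) (fun h => nav4 h.symm) nv4v5 (fun h => (fun h => ncv5 h.symm) h.symm) dv1v4 dcv1.symm dav1.symm dv1v5 dcd.symm dad.symm ddv5 dav4.symm dv4v5 dcv5
  have hbc : G.Adj b c := by
    by_contra hnhbc
    by_cases h40 : G.Adj v1 v2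
    · -- v1v2 adjacent
      by_cases h41 : G.Adj v1 v4
      · -- v1v4 adjacent
        exact no_p6 hP6 v2 v1 v4 c a v5 h40.symm h41 hcv4.symm hac.symm hav5.symm.symm nv2v4 (fun h => ncv2 h.symm) (fun h => nav2 h.symm) nv2v5 (fun h => ncv1 h.symm) (fun h => nav1 h.symm) nv1v5 (fun h => nav4 h.symm) nv4v5 (fun h => (fun h => ncv5 h.symm) h.symm) dv2v4 dcv2.symm dav2.symm dv2v5 dcv1.symm dav1.symm dv1v5 dav4.symm dv4v5 dcv5
      · -- v1v4 not adjacent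
        exact no_p6 hP6 v1 v2 b a c v4 h40 hbv2.symm hab.symm hac hcv4.symm.symm (fun h => nbv1 h.symm) (fun h => nav1 h.symm) (fun h => ncv1 h.symm) h41 (fun h => nav2 h.symm) (fun h => ncv2 h.symm) nv2v4 hnhbc (fun h => (fun h => nbv4 h.symm) h.symm) (fun h => (fun h => nav4 h.symm) h.symm) dbv1.symm dav1.symm dcv1.symm dv1v4 dav2.symm dcv2.symm dv2v4 dbc dbv4 dav4
    · -- v1v2 not adjacent
      by_cases h42 : G.Adj v1 v4
      · -- v1v4 adjacent
        exact no_p6 hP6 v1 v4 c a b v2 h42 hcv4.symm hac.symm hab hbv2.symm.symm (fun h => ncv1 h.symm) (fun h => nav1 h.symm) (fun h => nbv1 h.symm) h40 (fun h => nav4 h.symm) (fun h => nbv4 h.symm) (fun h => nv2v4 h.symm) (fun h => hnhbc h.symm) (fun h => (fun h => ncv2 h.symm) h.symm) (fun h => (fun h => nav2 h.symm) h.symm) dcv1.symm dav1.symm dbv1.symm dv1v2 dav4.symm dbv4.symm dv2v4.symm dbc.symm dcv2 dav2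
      · -- v1v4 not adjacent
        by_cases h43 : G.Adj a d
        · -- ad adjacent
          by_cases h44 : G.Adj v3 v4
          · -- v3v4 adjacent
            exact no_banner hBanner a v3 v4 d v5 hav3.symm.symm h44 hdv4.symm h43 hav5.symm.symm (fun h => (fun h => nav4 h.symm) h.symm) (fun h => ndv3 h.symm) nv3v5 nv4v5 (fun h => (fun h => ndv5 h.symm) h.symm) dav4 ddv3.symm dv3v5 dv4v5 ddv5
          · -- v3v4 not adjacent
            by_cases h45 : G.Adj c d
            · -- cd adjacent
              by_cases h46 : G.Adj b d
              · -- bd adjacent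
                exact no_banner hBanner d b v3 c v1 h46.symm hbv3.symm.symm hcv3.symm h45.symm hdv1.symm.symm (fun h => (fun h => ndv3 h.symm) h.symm) hnhbc (fun h => (fun h => nbv1 h.symm) h.symm) (fun h => nv1v3 h.symm) (fun h => (fun h => ncv1 h.symm) h.symm) ddv3 dbc dbv1 dv1v3.symm dcv1
              · -- bd not adjacent
                by_cases h47 : G.Adj v2 v3
                · -- v2v3 adjacent
                  by_cases h48 : G.Adj a e
                  · -- ae adjacent
                    exact no_banner hBanner a v3 v2 e v5 hav3.symm.symm h47.symm hev2.symm h48 hav5.symm.symm (fun h => (fun h => nav2 h.symm) h.symm) (fun h => nev3 h.symm) nv3v5 nv2v5 (fun h => (fun h => nev5 h.symm) h.symm) dav2 dev3.symm dv3v5 dv2v5 dev5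
                  · -- ae not adjacent
                    exact no_p6 hP6 v1 e v2 v3 a v5 hev1.symm hev2.symm.symm h47 hav3.symm hav5.symm.symm h40 nv1v3 (fun h => nav1 h.symm) nv1v5 (fun h => (fun h => nev3 h.symm) h.symm) (fun h => h48 h.symm) (fun h => (fun h => nev5 h.symm) h.symm) (fun h => nav2 h.symm) nv2v5 nv3v5 dv1v2 dv1v3 dav1.symm dv1v5 dev3 dae.symm dev5 dav2.symm dv2v5 dv3v5
                · -- v2v3 not adjacent
                  exact no_p6 hP6 v1 d c v3 b v2 hdv1.symm h45.symm hcv3.symm.symm hbv3.symm hbv2.symm.symm (fun h => ncv1 h.symm) nv1v3 (fun h => nbv1 h.symm) h40 (fun h => (fun h => ndv3 h.symm) h.symm) (fun h => h46 h.symm) (fun h => (fun h => ndv2 h.symm) h.symm) (fun h => hnhbc h.symm) (fun h => (fun h => ncv2 h.symm) h.symm) (fun h => h47 h.symm) dcv1.symm dv1v3 dbv1.symm dv1v2 ddv3 dbd.symm ddv2 dbc.symm dcv2 dv2v3.symm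
            · -- cd not adjacent
              exact no_banner hBanner a c v4 d v5 hac hcv4.symm.symm hdv4.symm h43 hav5.symm.symm (fun h => (fun h => nav4 h.symm) h.symm) h45 (fun h => (fun h => ncv5 h.symm) h.symm) nv4v5 (fun h => (fun h => ndv5 h.symm) h.symm) dav4 dcd dcv5 dv4v5 ddv5
        · -- ad not adjacent
          by_cases h49 : G.Adj v3 v4
          · -- v3v4 adjacent
            exact no_p6 hP6 v1 d v4 v3 a v5 hdv1.symm hdv4.symm.symm h49.symm hav3.symm hav5.symm.symm h42 nv1v3 (fun h => nav1 h.symm) nv1v5 (fun h => (fun h => ndv3 h.symm) h.symm) (fun h => h43 h.symm) (fun h => (fun h => ndv5 h.symm) h.symm) (fun h => nav4 h.symm) nv4v5 nv3v5 dv1v4 dv1v3 dav1.symm dv1v5 ddv3 dad.symm ddv5 dav4.symm dv4v5 dv3v5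
          · -- v3v4 not adjacent
            by_cases h50 : G.Adj c d
            · -- cd adjacent
              by_cases h51 : G.Adj b d
              · -- bd adjacent
                exact no_banner hBanner a b d c v5 hab h51 h50.symm hac hav5.symm.symm h43 hnhbc (fun h => (fun h => nbv5 h.symm) h.symm) (fun h => (fun h => ndv5 h.symm) h.symm) (fun h => (fun h => ncv5 h.symm) h.symm) dad dbc dbv5 ddv5 dcv5
              · -- bd not adjacent
                exact no_p6 hP6 v1 d c a b v2 hdv1.symm h50.symm hac.symm hab hbv2.symm.symm (fun h => ncv1 h.symm) (fun h => nav1 h.symm) (fun h => nbv1 h.symm) h40 (fun h => h43 h.symm) (fun h => h51 h.symm) (fun h => (fun h => ndv2 h.symm) h.symm) (fun h => hnhbc h.symm) (fun h => (fun h => ncv2 h.symm) h.symm) (fun h => (fun h => nav2 h.symm) h.symm) dcv1.symm dav1.symm dbv1.symm dv1v2 dad.symm dbd.symm ddv2 dbc.symm dcv2 dav2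
            · -- cd not adjacent
              exact no_p6 hP6 v1 d v4 c a v5 hdv1.symm hdv4.symm.symm hcv4.symm hac.symm hav5.symm.symm h42 (fun h => ncv1 h.symm) (fun h => nav1 h.symm) nv1v5 (fun h => h50 h.symm) (fun h => h43 h.symm) (fun h => (fun h => ndv5 h.symm) h.symm) (fun h => nav4 h.symm) nv4v5 (fun h => (fun h => ncv5 h.symm) h.symm) dv1v4 dcv1.symm dav1.symm dv1v5 dcd.symm dad.symm ddv5 dav4.symm dv4v5 dcv5
  have hcd : G.Adj c d := by
    by_contra hnhcd
    by_cases h52 : G.Adj a d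
    · -- ad adjacent
      exact no_banner hBanner a c v4 d v5 hac hcv4.symm.symm hdv4.symm h52 hav5.symm.symm (fun h => (fun h => nav4 h.symm) h.symm) hnhcd (fun h => (fun h => ncv5 h.symm) h.symm) nv4v5 (fun h => (fun h => ndv5 h.symm) h.symm) dav4 dcd dcv5 dv4v5 ddv5
    · -- ad not adjacent
      by_cases h53 : G.Adj v1 v4
      · -- v1v4 adjacent
        by_cases h54 : G.Adj v1 v2
        · -- v1v2 adjacent
          exact no_p6 hP6 v2 v1 v4 c a v5 h54.symm h53 hcv4.symm hac.symm hav5.symm.symm nv2v4 (fun h => ncv2 h.symm) (fun h => nav2 h.symm) nv2v5 (fun h => ncv1 h.symm) (fun h => nav1 h.symm) nv1v5 (fun h => nav4 h.symm) nv4v5 (fun h => (fun h => ncv5 h.symm) h.symm) dv2v4 dcv2.symm dav2.symm dv2v5 dcv1.symm dav1.symm dv1v5 dav4.symm dv4v5 dcv5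
        · -- v1v2 not adjacent
          by_cases h55 : G.Adj b d
          · -- bd adjacent
            exact no_banner hBanner b c v4 d v2 hbc hcv4.symm.symm hdv4.symm h55 hbv2.symm.symm (fun h => (fun h => nbv4 h.symm) h.symm) hnhcd (fun h => (fun h => ncv2 h.symm) h.symm) (fun h => nv2v4 h.symm) (fun h => (fun h => ndv2 h.symm) h.symm) dbv4 dcd dcv2 dv2v4.symm ddv2
          · -- bd not adjacent
            by_cases h56 : G.Adj c e
            · -- ce adjacent
              exact no_banner hBanner e v1 v4 c v2 hev1.symm.symm h53 hcv4.symm h56.symm hev2.symm.symm (fun h => (fun h => nev4 h.symm) h.symm) (fun h => ncv1 h.symm) h54 (fun h => nv2v4 h.symm) (fun h => (fun h => ncv2 h.symm) h.symm) dev4 dcv1.symm dv1v2 dv2v4.symm dcv2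
            · -- ce not adjacent
              by_cases h57 : G.Adj a e
              · -- ae adjacent
                by_cases h58 : G.Adj d e
                · -- de adjacent
                  by_cases h59 : G.Adj v2 v3
                  · -- v2v3 adjacent
                    exact no_banner hBanner a v3 v2 e v5 hav3.symm.symm h59.symm hev2.symm h57 hav5.symm.symm (fun h => (fun h => nav2 h.symm) h.symm) (fun h => nev3 h.symm) nv3v5 nv2v5 (fun h => (fun h => nev5 h.symm) h.symm) dav2 dev3.symm dv3v5 dv2v5 dev5
                  · -- v2v3 not adjacent
                    by_cases h60 : G.Adj v3 v4
                    · -- v3v4 adjacent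
                      exact far2 h13 h53 h60.symm
                    · -- v3v4 not adjacent
                      exact no_p6 hP6 v2 e v1 v4 c v3 hev2.symm hev1.symm.symm h53 hcv4.symm hcv3.symm.symm (fun h => h54 h.symm) nv2v4 (fun h => ncv2 h.symm) h59 (fun h => (fun h => nev4 h.symm) h.symm) (fun h => h56 h.symm) (fun h => (fun h => nev3 h.symm) h.symm) (fun h => ncv1 h.symm) nv1v3 (fun h => h60 h.symm) dv1v2.symm dv2v4 dcv2.symm dv2v3 dev4 dce.symm dev3 dcv1.symm dv1v3 dv3v4.symm
                · -- de not adjacent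
                  exact no_p6 hP6 v2 e a c v4 d hev2.symm h57.symm hac hcv4.symm.symm hdv4.symm (fun h => nav2 h.symm) (fun h => ncv2 h.symm) nv2v4 (fun h => ndv2 h.symm) (fun h => h56 h.symm) (fun h => (fun h => nev4 h.symm) h.symm) (fun h => h58 h.symm) (fun h => (fun h => nav4 h.symm) h.symm) h52 hnhcd dav2.symm dcv2.symm dv2v4 ddv2.symm dce.symm dev4 dde.symm dav4 dad dcd
              · -- ae not adjacent
                exact no_p6 hP6 v2 e v1 v4 c a hev2.symm hev1.symm.symm h53 hcv4.symm hac.symm (fun h => h54 h.symm) nv2v4 (fun h => ncv2 h.symm) (fun h => nav2 h.symm) (fun h => (fun h => nev4 h.symm) h.symm) (fun h => h56 h.symm) (fun h => h57 h.symm) (fun h => ncv1 h.symm) (fun h => nav1 h.symm) (fun h => nav4 h.symm) dv1v2.symm dv2v4 dcv2.symm dav2.symm dev4 dce.symm dae.symm dcv1.symm dav1.symm dav4.symm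
      · -- v1v4 not adjacent
        exact no_p6 hP6 v1 d v4 c a v5 hdv1.symm hdv4.symm.symm hcv4.symm hac.symm hav5.symm.symm h53 (fun h => ncv1 h.symm) (fun h => nav1 h.symm) nv1v5 (fun h => hnhcd h.symm) (fun h => h52 h.symm) (fun h => (fun h => ndv5 h.symm) h.symm) (fun h => nav4 h.symm) nv4v5 (fun h => (fun h => ncv5 h.symm) h.symm) dv1v4 dcv1.symm dav1.symm dv1v5 dcd.symm dad.symm ddv5 dav4.symm dv4v5 dcv5
  have hde : G.Adj d e := by
    by_contra hnhde
    by_cases h61 : G.Adj c e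
    · -- ce adjacent
      exact no_banner hBanner c d v1 e v3 hcd hdv1.symm.symm hev1.symm h61 hcv3.symm.symm (fun h => (fun h => ncv1 h.symm) h.symm) hnhde (fun h => (fun h => ndv3 h.symm) h.symm) nv1v3 (fun h => (fun h => nev3 h.symm) h.symm) dcv1 dde ddv3 dv1v3 dev3
    · -- ce not adjacent
      by_cases h62 : G.Adj v1 v2
      · -- v1v2 adjacent
        by_cases h63 : G.Adj v1 v4
        · -- v1v4 adjacent
          exact no_p6 hP6 v2 v1 v4 c a v5 h62.symm h63 hcv4.symm hac.symm hav5.symm.symm nv2v4 (fun h => ncv2 h.symm) (fun h => nav2 h.symm) nv2v5 (fun h => ncv1 h.symm) (fun h => nav1 h.symm) nv1v5 (fun h => nav4 h.symm) nv4v5 (fun h => (fun h => ncv5 h.symm) h.symm) dv2v4 dcv2.symm dav2.symm dv2v5 dcv1.symm dav1.symm dv1v5 dav4.symm dv4v5 dcv5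
        · -- v1v4 not adjacent
          by_cases h64 : G.Adj a d
          · -- ad adjacent
            by_cases h65 : G.Adj v3 v4
            · -- v3v4 adjacent
              exact no_banner hBanner a v3 v4 d v5 hav3.symm.symm h65 hdv4.symm h64 hav5.symm.symm (fun h => (fun h => nav4 h.symm) h.symm) (fun h => ndv3 h.symm) nv3v5 nv4v5 (fun h => (fun h => ndv5 h.symm) h.symm) dav4 ddv3.symm dv3v5 dv4v5 ddv5
            · -- v3v4 not adjacent
              by_cases h66 : G.Adj a e
              · -- ae adjacent
                exact no_banner hBanner a d v1 e v3 h64 hdv1.symm.symm hev1.symm h66 hav3.symm.symm (fun h => (fun h => nav1 h.symm) h.symm) hnhde (fun h => (fun h => ndv3 h.symm) h.symm) nv1v3 (fun h => (fun h => nev3 h.symm) h.symm) dav1 dde ddv3 dv1v3 dev3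
              · -- ae not adjacent
                by_cases h67 : G.Adj v2 v3
                · -- v2v3 adjacent
                  exact no_p6 hP6 v4 d a v3 v2 e hdv4.symm h64.symm hav3.symm.symm h67.symm hev2.symm (fun h => nav4 h.symm) (fun h => h65 h.symm) (fun h => nv2v4 h.symm) (fun h => nev4 h.symm) (fun h => (fun h => ndv3 h.symm) h.symm) (fun h => (fun h => ndv2 h.symm) h.symm) hnhde (fun h => (fun h => nav2 h.symm) h.symm) h66 (fun h => nev3 h.symm) dav4.symm dv3v4.symm dv2v4.symm dev4.symm ddv3 ddv2 dde dav2 dae dev3.symm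
                · -- v2v3 not adjacent
                  by_cases h68 : G.Adj b d
                  · -- bd adjacent
                    exact no_banner hBanner b v2 v1 d v3 hbv2.symm.symm h62.symm hdv1.symm h68 hbv3.symm.symm (fun h => (fun h => nbv1 h.symm) h.symm) (fun h => ndv2 h.symm) h67 nv1v3 (fun h => (fun h => ndv3 h.symm) h.symm) dbv1 ddv2.symm dv2v3 dv1v3 ddv3
                  · -- bd not adjacent
                    exact no_p6 hP6 v3 b v2 v1 d v4 hbv3.symm hbv2.symm.symm h62.symm hdv1.symm hdv4.symm.symm (fun h => h67 h.symm) (fun h => nv1v3 h.symm) (fun h => ndv3 h.symm) h65 (fun h => (fun h => nbv1 h.symm) h.symm) h68 (fun h => (fun h => nbv4 h.symm) h.symm) (fun h => ndv2 h.symm) nv2v4 h63 dv2v3.symm dv1v3.symm ddv3.symm dv3v4 dbv1 dbd dbv4 ddv2.symm dv2v4 dv1v4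
          · -- ad not adjacent
            exact no_p6 hP6 v2 v1 d c a v5 h62.symm hdv1.symm hcd.symm hac.symm hav5.symm.symm (fun h => ndv2 h.symm) (fun h => ncv2 h.symm) (fun h => nav2 h.symm) nv2v5 (fun h => ncv1 h.symm) (fun h => nav1 h.symm) nv1v5 (fun h => h64 h.symm) (fun h => (fun h => ndv5 h.symm) h.symm) (fun h => (fun h => ncv5 h.symm) h.symm) ddv2.symm dcv2.symm dav2.symm dv2v5 dcv1.symm dav1.symm dv1v5 dad.symm ddv5 dcv5
      · -- v1v2 not adjacent
        by_cases h69 : G.Adj v2 v3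
        · -- v2v3 adjacent
          by_cases h70 : G.Adj a e
          · -- ae adjacent
            exact no_banner hBanner a v3 v2 e v5 hav3.symm.symm h69.symm hev2.symm h70 hav5.symm.symm (fun h => (fun h => nav2 h.symm) h.symm) (fun h => nev3 h.symm) nv3v5 nv2v5 (fun h => (fun h => nev5 h.symm) h.symm) dav2 dev3.symm dv3v5 dv2v5 dev5
          · -- ae not adjacent
            exact no_p6 hP6 v1 e v2 v3 a v5 hev1.symm hev2.symm.symm h69 hav3.symm hav5.symm.symm h62 nv1v3 (fun h => nav1 h.symm) nv1v5 (fun h => (fun h => nev3 h.symm) h.symm) (fun h => h70 h.symm) (fun h => (fun h => nev5 h.symm) h.symm) (fun h => nav2 h.symm) nv2v5 nv3v5 dv1v2 dv1v3 dav1.symm dv1v5 dev3 dae.symm dev5 dav2.symm dv2v5 dv3v5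
        · -- v2v3 not adjacent
          exact no_p6 hP6 v2 e v1 d c v3 hev2.symm hev1.symm.symm hdv1.symm hcd.symm hcv3.symm.symm (fun h => h62 h.symm) (fun h => ndv2 h.symm) (fun h => ncv2 h.symm) h69 (fun h => hnhde h.symm) (fun h => h61 h.symm) (fun h => (fun h => nev3 h.symm) h.symm) (fun h => ncv1 h.symm) nv1v3 (fun h => (fun h => ndv3 h.symm) h.symm) dv1v2.symm ddv2.symm dcv2.symm dv2v3 dde.symm dce.symm dev3 dcv1.symm dv1v3 ddv3
  have hbe : G.Adj b e := by
    by_contra hnhbe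
    by_cases h71 : G.Adj a e
    · -- ae adjacent
      exact no_banner hBanner a b v2 e v5 hab hbv2.symm.symm hev2.symm h71 hav5.symm.symm (fun h => (fun h => nav2 h.symm) h.symm) hnhbe (fun h => (fun h => nbv5 h.symm) h.symm) nv2v5 (fun h => (fun h => nev5 h.symm) h.symm) dav2 dbe dbv5 dv2v5 dev5
    · -- ae not adjacent
      by_cases h72 : G.Adj v1 v2
      · -- v1v2 adjacent
        by_cases h73 : G.Adj v1 v4
        · -- v1v4 adjacent
          exact no_p6 hP6 v2 v1 v4 c a v5 h72.symm h73 hcv4.symm hac.symm hav5.symm.symm nv2v4 (fun h => ncv2 h.symm) (fun h => nav2 h.symm) nv2v5 (fun h => ncv1 h.symm) (fun h => nav1 h.symm) nv1v5 (fun h => nav4 h.symm) nv4v5 (fun h => (fun h => ncv5 h.symm) h.symm) dv2v4 dcv2.symm dav2.symm dv2v5 dcv1.symm dav1.symm dv1v5 dav4.symm dv4v5 dcv5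
        · -- v1v4 not adjacent
          by_cases h74 : G.Adj a d
          · -- ad adjacent
            by_cases h75 : G.Adj v3 v4
            · -- v3v4 adjacent
              exact no_banner hBanner a v3 v4 d v5 hav3.symm.symm h75 hdv4.symm h74 hav5.symm.symm (fun h => (fun h => nav4 h.symm) h.symm) (fun h => ndv3 h.symm) nv3v5 nv4v5 (fun h => (fun h => ndv5 h.symm) h.symm) dav4 ddv3.symm dv3v5 dv4v5 ddv5
            · -- v3v4 not adjacent
              by_cases h76 : G.Adj c e
              · -- ce adjacent
                exact no_banner hBanner c b v2 e v4 hbc.symm hbv2.symm.symm hev2.symm h76 hcv4.symm.symm (fun h => (fun h => ncv2 h.symm) h.symm) hnhbe (fun h => (fun h => nbv4 h.symm) h.symm) nv2v4 (fun h => (fun h => nev4 h.symm) h.symm) dcv2 dbe dbv4 dv2v4 dev4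
              · -- ce not adjacent
                by_cases h77 : G.Adj b d
                · -- bd adjacent
                  exact no_banner hBanner d v1 v2 b v4 hdv1.symm.symm h72 hbv2.symm h77.symm hdv4.symm.symm (fun h => (fun h => ndv2 h.symm) h.symm) (fun h => nbv1 h.symm) h73 nv2v4 (fun h => (fun h => nbv4 h.symm) h.symm) ddv2 dbv1.symm dv1v4 dv2v4 dbv4
                · -- bd not adjacent
                  by_cases h78 : G.Adj v2 v3
                  · -- v2v3 adjacent
                    exact far2 h13 h72 h78
                  · -- v2v3 not adjacent
                    exact no_p6 hP6 v3 b v2 v1 d v4 hbv3.symm hbv2.symm.symm h72.symm hdv1.symm hdv4.symm.symm (fun h => h78 h.symm) (fun h => nv1v3 h.symm) (fun h => ndv3 h.symm) h75 (fun h => (fun h => nbv1 h.symm) h.symm) h77 (fun h => (fun h => nbv4 h.symm) h.symm) (fun h => ndv2 h.symm) nv2v4 h73 dv2v3.symm dv1v3.symm ddv3.symm dv3v4 dbv1 dbd dbv4 ddv2.symm dv2v4 dv1v4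
          · -- ad not adjacent
            exact no_p6 hP6 v2 v1 d c a v5 h72.symm hdv1.symm hcd.symm hac.symm hav5.symm.symm (fun h => ndv2 h.symm) (fun h => ncv2 h.symm) (fun h => nav2 h.symm) nv2v5 (fun h => ncv1 h.symm) (fun h => nav1 h.symm) nv1v5 (fun h => h74 h.symm) (fun h => (fun h => ndv5 h.symm) h.symm) (fun h => (fun h => ncv5 h.symm) h.symm) ddv2.symm dcv2.symm dav2.symm dv2v5 dcv1.symm dav1.symm dv1v5 dad.symm ddv5 dcv5
      · -- v1v2 not adjacent
        exact no_p6 hP6 v1 e v2 b a v5 hev1.symm hev2.symm.symm hbv2.symm hab.symm hav5.symm.symm h72 (fun h => nbv1 h.symm) (fun h => nav1 h.symm) nv1v5 (fun h => hnhbe h.symm) (fun h => h71 h.symm) (fun h => (fun h => nev5 h.symm) h.symm) (fun h => nav2 h.symm) nv2v5 (fun h => (fun h => nbv5 h.symm) h.symm) dv1v2 dbv1.symm dav1.symm dv1v5 dbe.symm dae.symm dev5 dav2.symm dv2v5 dbv5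
  exact ⟨hac, hab, hbc, hcd, hde, hbe⟩
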